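/- arXiv:1807.06556 — 2 statements merged into one kernel-verified Lean document; each statement's English description precedes it below -/
import Mathlib

section
/- Let G be a finite bipartite multigraph (no loops) and let k ≥ 0 be an integer. A subgraph F of G is k-edge-colorable (i.e., its edges can be properly colored with at most k colors so that adjacent edges receive different colors) if and only if the maximum degree of F is at most k. -/
variable {V E : Type*}

/-- Degree of vertex `v` in the edge set `A` of a multigraph given by `ends`. -/
def degIn [DecidableEq V] (ends : E → Sym2 V) (A : Finset E) (v : V) : ℕ :=
  (A.filter (fun e => v ∈ ends e)).card

/-- The edge set `A` admits a proper edge coloring with at most `k` colors: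
adjacent (distinct, sharing an endpoint) edges get different colors. -/
def EdgeColorable (ends : E → Sym2 V) (A : Finset E) (k : ℕ) : Prop :=
  ∃ c : E → ℕ, (∀ e ∈ A, c e < k) ∧
    ∀ e₁ ∈ A, ∀ e₂ ∈ A, e₁ ≠ e₂ → (∃ v, v ∈ ends e₁ ∧ v ∈ ends e₂) → c e₁ ≠ c e₂

/-- `ν_k`: the maximum number of edges of a `k`-edge-colorable subgraph whose
edge set lies in `ground`. -/
noncomputable def nu (ends : E → Sym2 V) (ground : Finset E) (k : ℕ) : ℕ :=
  sSup {n | ∃ F : Finset E, F ⊆ ground ∧ EdgeColorable ends F k ∧ F.card = n}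

/-- The multigraph given by `ends` is bipartite. -/
def IsBipartite (ends : E → Sym2 V) : Prop :=
  ∃ f : V → Bool, ∀ e : E, ∀ u v : V, ends e = s(u, v) → f u ≠ f v

/-- There is an `A`-augmenting path: a simple path of odd length whose
odd-numbered (1st, 3rd, ...) edges lie outside `A`, whose even-numbered
(2nd, 4th, ...) edges belong to `A`, and whose endpoints have degree
at most `k - 1` in `A`. -/
def IsAugPath [DecidableEq V] (ends : E → Sym2 V) (A : Finset E) (k : ℕ) : Prop :=
  ∃ (m : ℕ) (vs : Fin (m + 1) → V) (es : Fin m → E),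
    Odd m ∧ Function.Injective vs ∧
    (∀ i : Fin m, ends (es i) = s(vs i.castSucc, vs i.succ)) ∧
    (∀ i : Fin m, (i : ℕ) % 2 = 0 → es i ∉ A) ∧
    (∀ i : Fin m, (i : ℕ) % 2 = 1 → es i ∈ A) ∧
    degIn ends A (vs 0) ≤ k - 1 ∧ degIn ends A (vs (Fin.last m)) ≤ k - 1


/-!
Kőnig's edge-coloring theorem, by induction on the number of edges. To add an edge `e = uv`
to a proper coloring of the others, pick a color `α` free at `u` and a color `β` free at `v`.
Swapping `α` and `β` along the `α`/`β`-alternating path starting at `u` keeps the coloring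
proper and makes `β` free at `u`; since the graph is bipartite, that path reaches `v` only
through `β`-edges, which do not exist, so `β` stays free at `v` and can be given to `e`.
-/

variable {ends : E → Sym2 V} {A : Finset E} {k : ℕ} {c : E → ℕ}

def IsProperEdgeColoring (ends : E → Sym2 V) (A : Finset E) (k : ℕ) (c : E → ℕ) : Prop :=
  (∀ e ∈ A, c e < k) ∧
    ∀ e₁ ∈ A, ∀ e₂ ∈ A, e₁ ≠ e₂ → (∃ v, v ∈ ends e₁ ∧ v ∈ ends e₂) → c e₁ ≠ c e₂

def IsFreeAt (ends : E → Sym2 V) (A : Finset E) (c : E → ℕ) (γ : ℕ) (x : V) : Prop :=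
  ∀ e ∈ A, x ∈ ends e → c e ≠ γ

section Degree

variable [DecidableEq V]

theorem degIn_mono {B : Finset E} (h : A ⊆ B) (x : V) : degIn ends A x ≤ degIn ends B x :=
  Finset.card_le_card (Finset.filter_subset_filter _ h)

theorem degIn_insert [DecidableEq E] {e : E} (he : e ∉ A) {x : V} (hx : x ∈ ends e) :
    degIn ends (insert e A) x = degIn ends A x + 1 := by
  rw [degIn, Finset.filter_insert, if_pos hx, Finset.card_insert_of_notMem]
  · rfl
  · exact fun h => he (Finset.mem_filter.mp h).1

theorem EdgeColorable.degIn_le (h : EdgeColorable ends A k) (x : V) : degIn ends A x ≤ k := by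
  obtain ⟨c, hlt, hprop⟩ := h
  calc degIn ends A x ≤ (Finset.range k).card := by
        refine Finset.card_le_card_of_injOn c (fun e he => ?_) fun e₁ h₁ e₂ h₂ hc => ?_
        · exact Finset.mem_range.mpr (hlt e (Finset.mem_filter.mp he).1)
        · rw [Finset.mem_coe, Finset.mem_filter] at h₁ h₂
          by_contra hne
          exact hprop e₁ h₁.1 e₂ h₂.1 hne ⟨x, h₁.2, h₂.2⟩ hc
    _ = k := Finset.card_range k

theorem exists_isFreeAt (c : E → ℕ) {x : V} (hx : degIn ends A x < k) :
    ∃ γ < k, IsFreeAt ends A c γ x := by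
  have hcard : ((A.filter (x ∈ ends ·)).image c).card < (Finset.range k).card :=
    Finset.card_image_le.trans_lt (hx.trans_eq (Finset.card_range k).symm)
  obtain ⟨γ, hγ, hγc⟩ := Finset.exists_mem_notMem_of_card_lt_card hcard
  exact ⟨γ, Finset.mem_range.mp hγ, fun e he hxe hce =>
    hγc (Finset.mem_image.mpr ⟨e, Finset.mem_filter.mpr ⟨he, hxe⟩, hce⟩)⟩

end Degree

theorem IsProperEdgeColoring.update [DecidableEq E] (hc : IsProperEdgeColoring ends A k c)
    {e : E} {γ : ℕ} (hγ : γ < k) (hfree : ∀ x ∈ ends e, IsFreeAt ends A c γ x) :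
    IsProperEdgeColoring ends (insert e A) k (Function.update c e γ) := by
  refine ⟨fun e' he' => ?_, fun e₁ h₁ e₂ h₂ hne hshare => ?_⟩
  · by_cases h : e' = e
    · rwa [h, Function.update_self]
    · rw [Function.update_of_ne h]
      exact hc.1 e' (Finset.mem_of_mem_insert_of_ne he' h)
  · obtain ⟨x, hx₁, hx₂⟩ := hshare
    by_cases h1 : e₁ = e <;> by_cases h2 : e₂ = e
    · exact absurd (h1.trans h2.symm) hne
    · subst h1
      rw [Function.update_self, Function.update_of_ne h2]
      exact (hfree x hx₁ e₂ (Finset.mem_of_mem_insert_of_ne h₂ h2) hx₂).symm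
    · subst h2
      rw [Function.update_self, Function.update_of_ne h1]
      exact hfree x hx₂ e₁ (Finset.mem_of_mem_insert_of_ne h₁ h1) hx₁
    · rw [Function.update_of_ne h1, Function.update_of_ne h2]
      exact hc.2 e₁ (Finset.mem_of_mem_insert_of_ne h₁ h1) e₂
        (Finset.mem_of_mem_insert_of_ne h₂ h2) hne ⟨x, hx₁, hx₂⟩

section KempeChange

variable {S : Set V} {α β : ℕ}

open Classical

noncomputable def swapOn (ends : E → Sym2 V) (S : Set V) (α β : ℕ) (c : E → ℕ) (e : E) : ℕ :=
  if ∃ x ∈ ends e, x ∈ S then Equiv.swap α β (c e) else c e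

theorem swapOn_eq_of_mem
    (hS : ∀ e ∈ A, c e = α ∨ c e = β → ∀ x ∈ ends e, x ∈ S → ∀ y ∈ ends e, y ∈ S)
    {e : E} (he : e ∈ A) {x : V} (hx : x ∈ ends e) :
    swapOn ends S α β c e = if x ∈ S then Equiv.swap α β (c e) else c e := by
  by_cases hcol : c e = α ∨ c e = β
  · have htouch : (∃ y ∈ ends e, y ∈ S) ↔ x ∈ S :=
      ⟨fun ⟨y, hy, hyS⟩ => hS e he hcol y hy hyS x hx, fun h => ⟨x, hx, h⟩⟩
    by_cases hxS : x ∈ S <;> simp only [swapOn, htouch, hxS, if_true, if_false]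
  · have hfix : Equiv.swap α β (c e) = c e :=
      Equiv.swap_apply_of_ne_of_ne (fun h => hcol (Or.inl h)) fun h => hcol (Or.inr h)
    unfold swapOn
    split_ifs <;> simp only [hfix]

theorem isProperEdgeColoring_swapOn (hc : IsProperEdgeColoring ends A k c) (hα : α < k)
    (hβ : β < k)
    (hS : ∀ e ∈ A, c e = α ∨ c e = β → ∀ x ∈ ends e, x ∈ S → ∀ y ∈ ends e, y ∈ S) :
    IsProperEdgeColoring ends A k (swapOn ends S α β c) := by
  refine ⟨fun e he => ?_, fun e₁ h₁ e₂ h₂ hne ⟨x, hx₁, hx₂⟩ => ?_⟩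
  · unfold swapOn
    have := hc.1 e he
    split_ifs
    · rw [Equiv.swap_apply_def]
      split_ifs <;> assumption
    · exact this
  · have hcc := hc.2 e₁ h₁ e₂ h₂ hne ⟨x, hx₁, hx₂⟩
    rw [swapOn_eq_of_mem hS h₁ hx₁, swapOn_eq_of_mem hS h₂ hx₂]
    split_ifs
    · exact (Equiv.injective _).ne hcc
    · exact hcc

end KempeChange

section KempeChain

variable {f : V → Bool} {u : V} {α β : ℕ}

/-- Since `α` is free at `u` and the graph is bipartite with sides `f`, the `α`/`β`-alternating
path from `u` leaves the side of `u` along `β`-edges and returns to it along `α`-edges. -/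
def kempeStep (ends : E → Sym2 V) (A : Finset E) (c : E → ℕ) (f : V → Bool) (u : V)
    (α β : ℕ) (x y : V) : Prop :=
  ∃ e ∈ A, ends e = s(x, y) ∧ c e = if f x = f u then β else α

def kempeChain (ends : E → Sym2 V) (A : Finset E) (c : E → ℕ) (f : V → Bool) (u : V)
    (α β : ℕ) : Set V :=
  {w | Relation.ReflTransGen (kempeStep ends A c f u α β) u w}

theorem mem_kempeChain_self : u ∈ kempeChain ends A c f u α β :=
  Relation.ReflTransGen.refl

theorem mem_kempeChain_of_ends_eq (hf : ∀ e x y, ends e = s(x, y) → f x ≠ f y)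
    (hc : IsProperEdgeColoring ends A k c) (hu : IsFreeAt ends A c α u) {e : E} (he : e ∈ A)
    (hcol : c e = α ∨ c e = β) {x y : V} (hxy : ends e = s(x, y))
    (hx : x ∈ kempeChain ends A c f u α β) : y ∈ kempeChain ends A c f u α β := by
  by_cases hstep : c e = if f x = f u then β else α
  · exact hx.tail ⟨e, he, hxy, hstep⟩
  rcases (Relation.ReflTransGen.cases_tail_iff _ _ _).mp hx with rfl | ⟨z, hz, e', he', hzx, hce'⟩
  · rw [if_pos rfl] at hstep
    exact absurd (hcol.resolve_right hstep) (hu e he (by rw [hxy]; exact Sym2.mem_mk_left _ _))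
  -- `e` is not the next step from `x`, so it has the color of the step `e'` into `x`
  have hce : c e' = c e := by
    have := hf e' z x hzx
    rcases hcol with h | h <;> rw [h] at hstep ⊢ <;>
      cases hfx : f x <;> cases hfz : f z <;> cases hfu : f u <;> simp_all
  obtain rfl : e' = e := by
    by_contra hne
    exact hc.2 e' he' e he hne ⟨x, by rw [hzx]; exact Sym2.mem_mk_right _ _,
      by rw [hxy]; exact Sym2.mem_mk_left _ _⟩ hce
  rcases Sym2.eq_iff.mp (hxy.symm.trans hzx) with ⟨-, rfl⟩ | ⟨-, rfl⟩
  · exact hx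
  · exact hz

theorem kempeChain_closed (hf : ∀ e x y, ends e = s(x, y) → f x ≠ f y)
    (hc : IsProperEdgeColoring ends A k c) (hu : IsFreeAt ends A c α u) :
    ∀ e ∈ A, c e = α ∨ c e = β → ∀ x ∈ ends e, x ∈ kempeChain ends A c f u α β →
      ∀ y ∈ ends e, y ∈ kempeChain ends A c f u α β := by
  intro e he hcol x hx hxS y hy
  obtain ⟨z, hz⟩ := Sym2.mem_iff_exists.mp hx
  rw [hz, Sym2.mem_iff] at hy
  rcases hy with rfl | rfl
  · exact hxS
  · exact mem_kempeChain_of_ends_eq hf hc hu he hcol hz hxS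

theorem notMem_kempeChain (hf : ∀ e x y, ends e = s(x, y) → f x ≠ f y) {v : V}
    (huv : f u ≠ f v) (hv : IsFreeAt ends A c β v) : v ∉ kempeChain ends A c f u α β := by
  intro hvS
  rcases (Relation.ReflTransGen.cases_tail_iff _ _ _).mp hvS with rfl | ⟨z, -, e, he, hzv, hce⟩
  · exact huv rfl
  · have hzu : f z = f u :=
      (Bool.eq_not_of_ne (hf e z v hzv)).trans (Bool.eq_not_of_ne huv).symm
    rw [if_pos hzu] at hce
    exact hv e he (by rw [hzv]; exact Sym2.mem_mk_right _ _) hce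

theorem IsProperEdgeColoring.exists_isFreeAt_of_bipartite
    (hf : ∀ e x y, ends e = s(x, y) → f x ≠ f y) {v : V} (huv : f u ≠ f v)
    (hc : IsProperEdgeColoring ends A k c) (hα : α < k) (hβ : β < k)
    (hαu : IsFreeAt ends A c α u) (hβv : IsFreeAt ends A c β v) :
    ∃ c', IsProperEdgeColoring ends A k c' ∧ IsFreeAt ends A c' β u ∧ IsFreeAt ends A c' β v := by
  have hS := kempeChain_closed (β := β) hf hc hαu
  refine ⟨swapOn ends (kempeChain ends A c f u α β) α β c, isProperEdgeColoring_swapOn hc hα hβ hS,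
    fun e he hue => ?_, fun e he hve => ?_⟩
  · rw [swapOn_eq_of_mem hS he hue, if_pos mem_kempeChain_self, Ne,
      Equiv.swap_apply_eq_iff, Equiv.swap_apply_right]
    exact hαu e he hue
  · rw [swapOn_eq_of_mem hS he hve, if_neg (notMem_kempeChain hf huv hβv)]
    exact hβv e he hve

end KempeChain

theorem edgeColorable_of_degIn_le [DecidableEq V] [DecidableEq E] (f : V → Bool)
    (hf : ∀ e x y, ends e = s(x, y) → f x ≠ f y) (A : Finset E)
    (hA : ∀ v, degIn ends A v ≤ k) : EdgeColorable ends A k := by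
  induction A using Finset.induction_on with
  | empty => exact ⟨fun _ => 0, by simp, by simp⟩
  | insert e A he ih =>
    obtain ⟨c, hc⟩ : ∃ c, IsProperEdgeColoring ends A k c := ih fun v => (degIn_mono (Finset.subset_insert e A) v).trans (hA v)
    have hlt : ∀ x ∈ ends e, degIn ends A x < k := fun x hx => by
      have := hA x
      rw [degIn_insert he hx] at this
      omega
    obtain ⟨u, v, huv⟩ : ∃ u v, ends e = s(u, v) :=
      Sym2.ind (f := fun z => ∃ u v, z = s(u, v)) (fun u v => ⟨u, v, rfl⟩) (ends e)
    obtain ⟨α, hα, hαu⟩ := exists_isFreeAt c (hlt u (by rw [huv]; exact Sym2.mem_mk_left _ _))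
    obtain ⟨β, hβ, hβv⟩ := exists_isFreeAt c (hlt v (by rw [huv]; exact Sym2.mem_mk_right _ _))
    obtain ⟨c', hc', hβu', hβv'⟩ :=
      hc.exists_isFreeAt_of_bipartite hf (hf e u v huv) hα hβ hαu hβv
    refine ⟨Function.update c' e β, hc'.update hβ fun x hx => ?_⟩
    rw [huv, Sym2.mem_iff] at hx
    rcases hx with rfl | rfl
    · exact hβu'
    · exact hβv'

theorem stmt_0_general [DecidableEq V] (ends : E → Sym2 V)
    (hbip : IsBipartite ends)
    (k : ℕ) (F : Finset E) :
    EdgeColorable ends F k ↔ ∀ v : V, degIn ends F v ≤ k := by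
  classical
  obtain ⟨f, hf⟩ := hbip
  exact ⟨EdgeColorable.degIn_le, edgeColorable_of_degIn_le f hf F⟩

/-- A subgraph `F` of a finite bipartite loopless multigraph is
`k`-edge-colorable iff its maximum degree is at most `k`. -/
theorem stmt_0 [Fintype V] [Fintype E] [DecidableEq V] (ends : E → Sym2 V)
    (hloop : ∀ e : E, ¬ (ends e).IsDiag) (hbip : IsBipartite ends)
    (k : ℕ) (F : Finset E) :
    EdgeColorable ends F k ↔ ∀ v : V, degIn ends F v ≤ k :=
  stmt_0_general ends hbip k F
end

section
/- Let G be a finite bipartite multigraph (no loops), let k ≥ 1, and let A be a k-edge-colorable subgraph of G with |E(A)| < ν_k(G). Then G contains an A-augmenting path, i.e., a simple path P of odd length from a vertex u to a vertex v in which the even edges (2nd, 4th, ...) belong to A, the odd edges (1st, 3rd, ...) lie outside A, and deg_A(u) ≤ k − 1 and deg_A(v) ≤ k − 1. -/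
variable {V E : Type*}

/-! Let `B` be a maximum `k`-edge-colorable subgraph and suppose there is no `A`-augmenting path.
Call a vertex even (odd) if it ends an alternating walk of even (odd) length starting at a vertex
of `A`-degree `< k`. An odd vertex of `A`-degree `< k`, or a vertex that is both even and odd,
yields an odd alternating walk between two vertices of `A`-degree `< k`, and in a bipartite graph
such a walk shortens to an augmenting path. Hence the even vertices `U` and the odd vertices `Y`
are disjoint, and every vertex outside `U` has `A`-degree `≥ k ≥` its `B`-degree. Edges of
`B \ A` leave `U` only towards `Y` and edges of `A \ B` leave `Y` only towards `U`; counting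
incidences over `U`, `Y` and the complement of `U` gives `|B \ A| ≤ |A \ B|`, i.e. `|B| ≤ |A|`. -/

open Finset

lemma IsBipartite.not_isDiag {ends : E → Sym2 V} (hbip : IsBipartite ends) (e : E) :
    ¬ (ends e).IsDiag := by
  obtain ⟨f, hf⟩ := hbip
  induction h : ends e using Sym2.ind with
  | _ a b => exact fun hd => hf e a b h (congrArg f (Sym2.mk_isDiag_iff.1 hd))

section Degree

variable [DecidableEq V] (ends : E → Sym2 V)

lemma degIn_le_of_edgeColorable {A : Finset E} {k : ℕ} (h : EdgeColorable ends A k) (v : V) :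
    degIn ends A v ≤ k := by
  obtain ⟨c, hlt, hne⟩ := h
  have hinj : Set.InjOn c (A.filter (v ∈ ends ·)) := fun e₁ h₁ e₂ h₂ hc => by
    simp only [coe_filter, Set.mem_ofPred_eq] at h₁ h₂
    by_contra h
    exact hne e₁ h₁.1 e₂ h₂.1 h ⟨v, h₁.2, h₂.2⟩ hc
  simpa [degIn] using card_le_card_of_injOn c (t := range k)
    (fun e he => by simpa using hlt e (mem_filter.1 he).1) hinj

lemma sum_degIn_eq_sum_card_filter (F : Finset E) (W : Finset V) :
    ∑ v ∈ W, degIn ends F v = ∑ e ∈ F, #(W.filter (· ∈ ends e)) := by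
  simp only [degIn, card_filter]
  exact sum_comm

lemma sum_degIn_eq_two_mul_card [Fintype V] (hloop : ∀ e, ¬ (ends e).IsDiag) (F : Finset E) :
    ∑ v, degIn ends F v = 2 * #F := by
  rw [sum_degIn_eq_sum_card_filter, mul_comm, ← smul_eq_mul, ← sum_const]
  refine sum_congr rfl fun e _ => ?_
  rw [← Sym2.card_toFinset_of_not_isDiag _ (hloop e)]
  congr 1
  ext v
  simp [Sym2.mem_toFinset]

lemma degIn_sdiff_add_degIn_inter [DecidableEq E] (A B : Finset E) (v : V) :
    degIn ends (A \ B) v + degIn ends (A ∩ B) v = degIn ends A v := by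
  rw [degIn, degIn, ← card_union_of_disjoint (disjoint_filter_filter (disjoint_sdiff_inter A B)),
    ← filter_union, sdiff_union_inter, degIn]

lemma degIn_sdiff_le_degIn_sdiff [DecidableEq E] {A B : Finset E} {v : V}
    (h : degIn ends B v ≤ degIn ends A v) :
    degIn ends (B \ A) v ≤ degIn ends (A \ B) v := by
  have hA := degIn_sdiff_add_degIn_inter ends A B v
  have hB := degIn_sdiff_add_degIn_inter ends B A v
  rw [inter_comm] at hB
  omega

lemma sum_degIn_le_sum_degIn {F : Finset E} {S T : Finset V} (hST : Disjoint S T)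
    (h : ∀ e ∈ F, ∀ a b, ends e = s(a, b) → a ∈ S → b ∈ T) :
    ∑ v ∈ S, degIn ends F v ≤ ∑ v ∈ T, degIn ends F v := by
  rw [sum_degIn_eq_sum_card_filter, sum_degIn_eq_sum_card_filter]
  refine sum_le_sum fun e he => ?_
  obtain hempty | ⟨a, ha⟩ := (S.filter (· ∈ ends e)).eq_empty_or_nonempty
  · simp [hempty]
  obtain ⟨haS, hae⟩ := mem_filter.1 ha
  obtain ⟨b, hab⟩ := Sym2.mem_iff_exists.1 hae
  have hbT : b ∈ T := h e he a b hab haS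
  have hsub : S.filter (· ∈ ends e) ⊆ {a} := fun w hw => by
    obtain ⟨hwS, hwe⟩ := mem_filter.1 hw
    rcases Sym2.mem_iff.1 (hab ▸ hwe) with rfl | rfl
    · exact mem_singleton_self w
    · exact absurd hbT (disjoint_left.1 hST hwS)
  calc #(S.filter (· ∈ ends e)) ≤ #{a} := card_le_card hsub
    _ ≤ #(T.filter (· ∈ ends e)) :=
      one_le_card.2 ⟨b, mem_filter.2 ⟨hbT, hab ▸ Sym2.mem_mk_right a b⟩⟩

end Degree

lemma card_le_card_of_alternating_cut [DecidableEq V] [Fintype V] [DecidableEq E]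
    {ends : E → Sym2 V} (hloop : ∀ e, ¬ (ends e).IsDiag) {A B : Finset E} {U Y : Finset V}
    (hUY : Disjoint U Y) (hdeg : ∀ v ∉ U, degIn ends B v ≤ degIn ends A v)
    (hBA : ∀ e ∈ B \ A, ∀ a b, ends e = s(a, b) → a ∈ U → b ∈ Y)
    (hAB : ∀ e ∈ A \ B, ∀ a b, ends e = s(a, b) → a ∈ Y → b ∈ U) :
    #B ≤ #A := by
  have hY : Y ⊆ Uᶜ := fun v hv => mem_compl.2 (disjoint_right.1 hUY hv)
  have hU : ∑ v ∈ U, degIn ends (B \ A) v ≤ ∑ v ∈ U, degIn ends (A \ B) v :=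
    calc ∑ v ∈ U, degIn ends (B \ A) v
        ≤ ∑ v ∈ Y, degIn ends (B \ A) v := sum_degIn_le_sum_degIn ends hUY hBA
      _ ≤ ∑ v ∈ Y, degIn ends (A \ B) v := sum_le_sum fun v hv =>
          degIn_sdiff_le_degIn_sdiff ends (hdeg v (mem_compl.1 (hY hv)))
      _ ≤ ∑ v ∈ U, degIn ends (A \ B) v := sum_degIn_le_sum_degIn ends hUY.symm hAB
  have hUc : ∑ v ∈ Uᶜ, degIn ends (B \ A) v ≤ ∑ v ∈ Uᶜ, degIn ends (A \ B) v :=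
    sum_le_sum fun v hv => degIn_sdiff_le_degIn_sdiff ends (hdeg v (mem_compl.1 hv))
  have hsdiff : 2 * #(B \ A) ≤ 2 * #(A \ B) := by
    rw [← sum_degIn_eq_two_mul_card ends hloop, ← sum_degIn_eq_two_mul_card ends hloop,
      ← sum_add_sum_compl U, ← sum_add_sum_compl U]
    exact add_le_add hU hUc
  have hB := card_sdiff_add_card_inter B A
  have hA := card_sdiff_add_card_inter A B
  rw [inter_comm] at hB
  omega

lemma exists_edgeColorable_card_eq_nu [Fintype E] (ends : E → Sym2 V) (k : ℕ) :
    ∃ B : Finset E, EdgeColorable ends B k ∧ #B = nu ends univ k := by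
  have hne : {n | ∃ F : Finset E, F ⊆ univ ∧ EdgeColorable ends F k ∧ #F = n}.Nonempty :=
    ⟨0, ∅, empty_subset _, ⟨fun _ => 0, by simp, by simp⟩, card_empty⟩
  have hbdd : BddAbove {n | ∃ F : Finset E, F ⊆ univ ∧ EdgeColorable ends F k ∧ #F = n} :=
    ⟨Fintype.card E, by rintro n ⟨F, -, -, rfl⟩; exact card_le_univ F⟩
  obtain ⟨B, -, hB, hcard⟩ := Nat.sSup_mem hne hbdd
  exact ⟨B, hB, hcard⟩

/-- `vs 0, es 0, vs 1, …, es (m - 1), vs m` is a walk whose `i`-th edge lies in `A` iff `i` is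
odd. -/
def IsAltWalk (ends : E → Sym2 V) (A : Finset E) (m : ℕ) (vs : ℕ → V) (es : ℕ → E) : Prop :=
  ∀ i < m, ends (es i) = s(vs i, vs (i + 1)) ∧ (es i ∈ A ↔ i % 2 = 1)

namespace IsAltWalk

variable {ends : E → Sym2 V} {A : Finset E} {m : ℕ} {vs : ℕ → V} {es : ℕ → E}

lemma snoc (h : IsAltWalk ends A m vs es) {e : E} {w : V} (he : ends e = s(vs m, w))
    (heA : e ∈ A ↔ m % 2 = 1) :
    IsAltWalk ends A (m + 1) (Function.update vs (m + 1) w) (Function.update es m e) := by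
  intro i hi
  rcases (Nat.lt_succ_iff.1 hi).lt_or_eq with hi | rfl
  · simpa [Function.update_of_ne hi.ne, Function.update_of_ne (by omega : i + 1 ≠ m + 1),
      Function.update_of_ne (by omega : i ≠ m + 1)] using h i hi
  · simpa [Function.update_of_ne (by omega : i ≠ i + 1)] using ⟨he, heA⟩

lemma even_sub_of_eq (h : IsAltWalk ends A m vs es) (hbip : IsBipartite ends) {i j : ℕ}
    (hij : i ≤ j) (hj : j ≤ m) (heq : vs i = vs j) : Even (j - i) := by
  obtain ⟨f, hf⟩ := hbip
  have hcolor : ∀ t ≤ m, (f (vs t) = f (vs 0) ↔ Even t) := by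
    intro t ht
    induction t with
    | zero => simp
    | succ t ih =>
      have hstep := hf _ _ _ (h t ht).1
      rw [Nat.even_add_one, ← ih (by omega)]
      revert hstep
      cases f (vs t) <;> cases f (vs (t + 1)) <;> cases f (vs 0) <;> decide
  rw [Nat.even_sub hij, ← hcolor i (hij.trans hj), ← hcolor j hj, heq]

lemma splice (h : IsAltWalk ends A m vs es) {i d : ℕ} (hd : Even d) (hm : i + d ≤ m)
    (heq : vs i = vs (i + d)) :
    IsAltWalk ends A (m - d) (fun t => vs (if t ≤ i then t else t + d))
      (fun t => es (if t < i then t else t + d)) := by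
  obtain ⟨d, rfl⟩ := hd
  intro t ht
  by_cases hti : t < i
  · simpa [hti, hti.le, Nat.succ_le_of_lt hti] using h t (by omega)
  · obtain ⟨hends, hA⟩ := h (t + (d + d)) (by omega)
    have hstart : vs (if t ≤ i then t else t + (d + d)) = vs (t + (d + d)) := by
      split_ifs with h'
      · obtain rfl : t = i := by omega
        exact heq
      · rfl
    simp only [hti, if_false, hstart, show ¬ t + 1 ≤ i by omega]
    refine ⟨by rwa [Nat.add_right_comm], hA.trans ?_⟩
    omega

variable [DecidableEq V] {k : ℕ}

lemma isAugPath_of_injOn (h : IsAltWalk ends A m vs es) (hm : Odd m)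
    (hinj : Set.InjOn vs (Set.Iic m)) (h0 : degIn ends A (vs 0) < k)
    (hlast : degIn ends A (vs m) < k) : IsAugPath ends A k := by
  refine ⟨m, fun t => vs t, fun t => es t, hm, fun s t hst => Fin.ext ?_,
    fun t => (h t t.2).1, fun t ht hA => ?_, fun t ht => (h t t.2).2.2 ht, ?_, ?_⟩
  · exact hinj (Set.mem_Iic.2 (Nat.lt_succ_iff.1 s.2)) (Set.mem_Iic.2 (Nat.lt_succ_iff.1 t.2)) hst
  · have := (h t t.2).2.1 hA
    omega
  · simpa using Nat.le_sub_one_of_lt h0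
  · simpa using Nat.le_sub_one_of_lt hlast

/-- In a bipartite graph a repeated vertex bounds an even closed subwalk, which can be cut out;
a shortest such walk is therefore a path. -/
lemma isAugPath (h : IsAltWalk ends A m vs es) (hbip : IsBipartite ends) (hm : Odd m)
    (h0 : degIn ends A (vs 0) < k) (hlast : degIn ends A (vs m) < k) : IsAugPath ends A k := by
  induction m using Nat.strong_induction_on generalizing vs es with
  | _ m ih =>
  by_cases hinj : Set.InjOn vs (Set.Iic m)
  · exact h.isAugPath_of_injOn hm hinj h0 hlast
  have shorten : ∀ i j, i < j → j ≤ m → vs i = vs j → IsAugPath ends A k := by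
    intro i j hij hj heq
    obtain ⟨d, rfl⟩ := Nat.exists_eq_add_of_le hij.le
    have hd : Even d := by simpa using h.even_sub_of_eq hbip hij.le hj heq
    refine ih (m - d) (by omega) (h.splice hd hj heq)
      (Nat.Odd.sub_even (by omega) hm hd)
      (by simpa using h0) ?_
    split_ifs with hle
    · rwa [show m - d = i by omega, heq, show i + d = m by omega]
    · rwa [Nat.sub_add_cancel (by omega)]
  simp only [Set.InjOn, Set.mem_Iic, not_forall] at hinj
  obtain ⟨i, hi, j, hj, heq, hne⟩ := hinj
  rcases Nat.lt_or_gt_of_ne hne with hij | hji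
  · exact shorten i j hij hj heq
  · exact shorten j i hji hi heq.symm

end IsAltWalk

/-- `AltReach ends A k odd v`: some alternating walk (first edge outside `A`) from a vertex of
`A`-degree `< k` ends at `v`, and its length is odd iff `odd`. -/
inductive AltReach [DecidableEq V] (ends : E → Sym2 V) (A : Finset E) (k : ℕ) : Bool → V → Prop
  | deficient {v : V} : degIn ends A v < k → AltReach ends A k false v
  | step_not_mem {u v : V} {e : E} :
      AltReach ends A k false u → e ∉ A → ends e = s(u, v) → AltReach ends A k true v
  | step_mem {u v : V} {e : E} :
      AltReach ends A k true u → e ∈ A → ends e = s(u, v) → AltReach ends A k false v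

namespace AltReach

variable [DecidableEq V] {ends : E → Sym2 V} {A : Finset E} {k : ℕ}

lemma exists_isAltWalk [Nonempty E] {odd : Bool} {v : V} (h : AltReach ends A k odd v) :
    ∃ m vs es, IsAltWalk ends A m vs es ∧ degIn ends A (vs 0) < k ∧ vs m = v ∧
      (m % 2 = 1 ↔ odd) := by
  induction h with
  | deficient hv =>
    exact ⟨0, fun _ => _, fun _ => Classical.arbitrary E, fun _ h => (Nat.not_lt_zero _ h).elim,
      hv, rfl, by simp⟩
  | step_not_mem _ heA he ih | step_mem _ heA he ih =>
    obtain ⟨m, vs, es, hw, h0, rfl, hm⟩ := ih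
    refine ⟨m + 1, _, _, hw.snoc he ?_, by simpa using h0, by simp, ?_⟩
    all_goals simp only [heA, Bool.false_eq_true, iff_false, iff_true, false_iff, true_iff] at hm ⊢
    all_goals omega

lemma exists_odd_deficient {odd : Bool} {v : V} (h : AltReach ends A k odd v)
    (h' : AltReach ends A k (!odd) v) : ∃ w, AltReach ends A k true w ∧ degIn ends A w < k := by
  induction h with
  | deficient hv => exact ⟨_, h', hv⟩
  | step_not_mem _ heA he ih => exact ih (step_not_mem h' heA (he.trans Sym2.eq_swap))
  | step_mem _ heA he ih => exact ih (step_mem h' heA (he.trans Sym2.eq_swap))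

lemma isAugPath (hbip : IsBipartite ends) {v : V} (h : AltReach ends A k true v)
    (hv : degIn ends A v < k) : IsAugPath ends A k := by
  have : Nonempty E := by cases h; exact ⟨‹E›⟩
  obtain ⟨m, vs, es, hw, h0, rfl, hm⟩ := h.exists_isAltWalk
  exact hw.isAugPath hbip (Nat.odd_iff.2 (by simpa using hm)) h0 hv

end AltReach

theorem stmt_6_general [Fintype V] [Fintype E] [DecidableEq V] (ends : E → Sym2 V)
    (hbip : IsBipartite ends) (k : ℕ) (A : Finset E)
    (hlt : A.card < nu ends (Finset.univ : Finset E) k) :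
    IsAugPath ends A k := by
  classical
  by_contra hno
  obtain ⟨B, hBcol, hB⟩ := exists_edgeColorable_card_eq_nu ends k
  have hfull : ∀ v, AltReach ends A k true v → k ≤ degIn ends A v := fun v hv =>
    not_lt.1 fun hdef => hno (hv.isAugPath hbip hdef)
  have hdisj : Disjoint (univ.filter (AltReach ends A k false))
      (univ.filter (AltReach ends A k true)) := by
    refine disjoint_filter.2 fun v _ hU hY => ?_
    obtain ⟨w, hw, hdef⟩ := hU.exists_odd_deficient hY
    exact (hfull w hw).not_gt hdef
  refine hlt.not_ge (hB ▸ card_le_card_of_alternating_cut hbip.not_isDiag hdisj ?_ ?_ ?_)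
  · intro v hv
    exact (degIn_le_of_edgeColorable ends hBcol v).trans
      (not_lt.1 fun h => hv (mem_filter.2 ⟨mem_univ v, .deficient h⟩))
  · intro e he a b hab ha
    exact mem_filter.2 ⟨mem_univ b, (mem_filter.1 ha).2.step_not_mem (mem_sdiff.1 he).2 hab⟩
  · intro e he a b hab ha
    exact mem_filter.2 ⟨mem_univ b, (mem_filter.1 ha).2.step_mem (mem_sdiff.1 he).1 hab⟩

/-- In a bipartite loopless multigraph, a non-maximum `k`-edge-colorable
subgraph `A` admits an `A`-augmenting path. -/
theorem stmt_6 [Fintype V] [Fintype E] [DecidableEq V] (ends : E → Sym2 V)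
    (hloop : ∀ e : E, ¬ (ends e).IsDiag) (hbip : IsBipartite ends)
    (k : ℕ) (hk : 1 ≤ k) (A : Finset E) (hcol : EdgeColorable ends A k)
    (hlt : A.card < nu ends (Finset.univ : Finset E) k) :
    IsAugPath ends A k :=
  stmt_6_general ends hbip k A hlt
end
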